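/- Let V ∈ H₊^{−m}. The sesquilinear form t₊[u,v] = ⟨D₊^{2m}u, v⟩₊ + ⟨V·u, v⟩₊ with domain H₊^m is densely defined, closed, and sectorial on L²(0,1). -/

import Mathlib

/- STATEMENT 6: For V ∈ H₊^{−m}, the sesquilinear form
t₊[u,v] = ⟨D₊^{2m}u,v⟩₊ + ⟨V·u,v⟩₊ with domain H₊^m is densely
defined, closed and sectorial on L²(0,1).  Model: L²(0,1) ≅ ℓ²(ℤ)
(Fourier coefficients û(2k)); the form domain H₊^m is the set of
u ∈ ℓ² with Σ ⟨2k⟩^{2m}|û(2k)|² < ∞; the form is written in Fourier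
coordinates, with ⟨D₊^{2m}u,v⟩₊ = Σ (2kπ)^{2m}û(2k)conj(v̂(2k)) and
⟨V·u,v⟩₊ = Σ (V̂*û)(k)conj(v̂(2k)). -/

noncomputable section
open Complex Filter

abbrev E := lp (fun _ : ℤ => ℂ) 2

def wtp (s : ℝ) (k : ℤ) : ℝ := ((1 + |(2 * k : ℤ)| : ℝ)) ^ (2 * s)

def conv (a b : ℤ → ℂ) (k : ℤ) : ℂ := ∑' j : ℤ, a (k - j) * b j

def cplus (m : ℕ) (k : ℤ) : ℝ := (2 * Real.pi * (k : ℝ)) ^ (2 * m)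

/-- The form domain `H₊^m ⊂ L²(0,1)`. -/
def domt (m : ℕ) : Set E := {u | Summable fun k : ℤ => wtp (m : ℝ) k * ‖u k‖ ^ 2}

/-- The sesquilinear form `t₊[u,v] = ⟨D₊^{2m}u,v⟩₊ + ⟨V·u,v⟩₊`. -/
def tform (m : ℕ) (V : ℤ → ℂ) (u v : E) : ℂ :=
  (∑' k : ℤ, ((cplus m k : ℝ) : ℂ) * u k * (starRingEnd ℂ) (v k)) +
    ∑' k : ℤ, conv V (fun j => u j) k * (starRingEnd ℂ) (v k)

/-! In Fourier coordinates `t[u] = a[u] + b[u]` with the kinetic part `a[u] = ∑ (2πk)^{2m} |u k|²`.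
Write `|V k| = ⟨2k⟩^m W k` with `W ∈ ℓ²`. Peetre's inequality
`⟨2(k - j)⟩^m ≤ 2^m (⟨2k⟩^m + ⟨2j⟩^m)` and Young's inequality bound `|b[u]|` by
`‖W‖₂ ‖u‖_{ℓ¹} ‖u‖_{H^m}`, and since `∑ ⟨2k⟩^{-2m} < ∞` for `m ≥ 1`,
`‖u‖_{ℓ¹} ≤ δ ‖u‖_{H^m} + C_δ ‖u‖` for every `δ > 0`. So `b` is form-bounded with respect to `a`
with relative bound `0`: `|t[u] - a[u]| ≤ a[u] / 2 + K ‖u‖²`. This gives the sector, and makes the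
form norm equivalent to the `H^m` norm, so closedness is completeness of weighted `ℓ²`. Finitely
supported sequences lie in the domain, which is therefore dense. -/

open scoped ComplexConjugate

section Summation

variable {ι : Type*}

theorem summable_and_tsum_mul_le_sqrt_mul_sqrt {f g : ι → ℝ} (hf : ∀ i, 0 ≤ f i)
    (hg : ∀ i, 0 ≤ g i) (hf2 : Summable fun i => f i ^ 2) (hg2 : Summable fun i => g i ^ 2) :
    Summable (fun i => f i * g i) ∧ ∑' i, f i * g i ≤ √(∑' i, f i ^ 2) * √(∑' i, g i ^ 2) := by
  simpa [Real.sqrt_eq_rpow, Real.rpow_two] using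
    Real.summable_and_inner_le_Lp_mul_Lq_tsum_of_nonneg .two_two hf hg
      (by simpa [Real.rpow_two] using hf2) (by simpa [Real.rpow_two] using hg2)

theorem summable_mul_sq_norm_sub {F : Type*} [SeminormedAddCommGroup F] {ρ : ι → ℝ}
    {a b : ι → F} (ha : Summable fun i => (ρ i * ‖a i‖) ^ 2)
    (hb : Summable fun i => (ρ i * ‖b i‖) ^ 2) :
    Summable fun i => (ρ i * ‖a i - b i‖) ^ 2 := by
  refine .of_nonneg_of_le (fun i => sq_nonneg _) (fun i => ?_) ((ha.add hb).mul_left 2)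
  have h := norm_sub_le (a i) (b i)
  have := norm_nonneg (a i - b i)
  simp only [mul_pow]
  nlinarith [sq_nonneg (ρ i), sq_nonneg (‖a i‖ - ‖b i‖), mul_le_mul_of_nonneg_left
    (pow_le_pow_left₀ this h 2) (sq_nonneg (ρ i))]

/-- Split off a finite set outside of which `∑ ρ⁻² < δ²`. -/
theorem exists_tsum_le_sqrt_add_sqrt {ρ : ι → ℝ} (hρ : ∀ i, 0 < ρ i)
    (hρ2 : Summable fun i => (ρ i)⁻¹ ^ 2) {δ : ℝ} (hδ : 0 < δ) :
    ∃ C ≥ 0, ∀ a : ι → ℝ, (∀ i, 0 ≤ a i) → Summable (fun i => a i ^ 2) →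
      Summable (fun i => (ρ i * a i) ^ 2) →
      Summable a ∧ ∑' i, a i ≤ C * √(∑' i, a i ^ 2) + δ * √(∑' i, (ρ i * a i) ^ 2) := by
  obtain ⟨s, hs⟩ := ((tendsto_order.1 (tendsto_tsum_compl_atTop_zero
    fun i => (ρ i)⁻¹ ^ 2)).2 (δ ^ 2) (by positivity)).exists
  refine ⟨√(s.card : ℝ), Real.sqrt_nonneg _, fun a ha ha2 hρa2 => ?_⟩
  have hρa : ∀ i, (ρ i)⁻¹ * (ρ i * a i) = a i := fun i => inv_mul_cancel_left₀ (hρ i).ne' _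
  have hsum : Summable a := by
    simpa only [hρa] using (summable_and_tsum_mul_le_sqrt_mul_sqrt
      (fun i => (inv_pos.2 (hρ i)).le) (fun i => (mul_nonneg (hρ i).le (ha i))) hρ2 hρa2).1
  refine ⟨hsum, ?_⟩
  have hhead : ∑ i ∈ s, a i ≤ √(s.card : ℝ) * √(∑' i, a i ^ 2) := by
    calc ∑ i ∈ s, a i = ∑ i ∈ s, 1 * a i := by simp
      _ ≤ √(∑ i ∈ s, (1 : ℝ) ^ 2) * √(∑ i ∈ s, a i ^ 2) := Real.sum_mul_le_sqrt_mul_sqrt _ _ _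
      _ ≤ √(s.card : ℝ) * √(∑' i, a i ^ 2) := by
        simp only [one_pow, Finset.sum_const, nsmul_eq_mul, mul_one]
        gcongr
        exact ha2.sum_le_tsum s fun i _ => sq_nonneg _
  have htail : ∑' i : {i // i ∉ s}, a i ≤ δ * √(∑' i, (ρ i * a i) ^ 2) := by
    calc ∑' i : {i // i ∉ s}, a i = ∑' i : {i // i ∉ s}, (ρ i)⁻¹ * (ρ i * a i) := by
          simp only [hρa]
      _ ≤ √(∑' i : {i // i ∉ s}, (ρ i)⁻¹ ^ 2) * √(∑' i : {i // i ∉ s}, (ρ i * a i) ^ 2) :=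
          (summable_and_tsum_mul_le_sqrt_mul_sqrt (f := fun i : {i // i ∉ s} => (ρ i)⁻¹)
            (fun i => (inv_pos.2 (hρ i)).le) (fun i => mul_nonneg (hρ i).le (ha i))
            (hρ2.subtype _) (hρa2.subtype _)).2
      _ ≤ √(δ ^ 2) * √(∑' i, (ρ i * a i) ^ 2) := by
          gcongr
          exact hρa2.tsum_subtype_le _ _ (fun i => sq_nonneg _)
      _ = δ * √(∑' i, (ρ i * a i) ^ 2) := by rw [Real.sqrt_sq hδ.le]
  rw [← hsum.sum_add_tsum_subtype_compl s]
  linarith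

end Summation

section Kernel

variable {G : Type*} [AddGroup G] {W x y : G → ℝ}

/-- Young's inequality: Cauchy–Schwarz in `b` for each fixed `a`, then summation over `a`. -/
theorem summable_and_tsum_kernel_le (hW : ∀ g, 0 ≤ W g) (hx : ∀ g, 0 ≤ x g) (hy : ∀ g, 0 ≤ y g)
    (hW2 : Summable fun g => W g ^ 2) (hx2 : Summable fun g => x g ^ 2) (hy1 : Summable y) :
    Summable (fun p : G × G => y p.1 * W (p.1 - p.2) * x p.2) ∧
      ∑' p : G × G, y p.1 * W (p.1 - p.2) * x p.2 ≤
        (∑' g, y g) * (√(∑' g, W g ^ 2) * √(∑' g, x g ^ 2)) := by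
  have hfiber : ∀ a : G, Summable (fun b => W (a - b) * x b) ∧
      ∑' b, W (a - b) * x b ≤ √(∑' g, W g ^ 2) * √(∑' g, x g ^ 2) := by
    intro a
    have hshift : ∑' b, W (a - b) ^ 2 = ∑' g, W g ^ 2 := (Equiv.subLeft a).tsum_eq fun g => W g ^ 2
    rw [← hshift]
    exact summable_and_tsum_mul_le_sqrt_mul_sqrt (fun b => hW _) hx
      ((Equiv.subLeft a).summable_iff.2 hW2) hx2
  set C := √(∑' g, W g ^ 2) * √(∑' g, x g ^ 2)
  have hnonneg : 0 ≤ fun p : G × G => y p.1 * W (p.1 - p.2) * x p.2 :=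
    fun p => mul_nonneg (mul_nonneg (hy _) (hW _)) (hx _)
  have hrow : ∀ a, ∑' b, y a * W (a - b) * x b ≤ y a * C := fun a => by
    simp only [mul_assoc, tsum_mul_left]
    exact mul_le_mul_of_nonneg_left (hfiber a).2 (hy a)
  have hrows : ∀ a, Summable fun b => y a * W (a - b) * x b := fun a => by
    simpa only [mul_assoc] using (hfiber a).1.mul_left (y a)
  have hsum := (summable_prod_of_nonneg hnonneg).2 ⟨hrows,
    .of_nonneg_of_le (fun a => tsum_nonneg fun b => hnonneg (a, b)) hrow (hy1.mul_right C)⟩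
  refine ⟨hsum, ?_⟩
  calc ∑' p : G × G, y p.1 * W (p.1 - p.2) * x p.2
      = ∑' a, ∑' b, y a * W (a - b) * x b := hsum.tsum_prod' hrows
    _ ≤ ∑' a, y a * C := (hsum.prod).tsum_le_tsum hrow (hy1.mul_right C)
    _ = (∑' g, y g) * C := tsum_mul_right

theorem summable_and_tsum_kernel_le' (hW : ∀ g, 0 ≤ W g) (hx : ∀ g, 0 ≤ x g)
    (hy : ∀ g, 0 ≤ y g) (hW2 : Summable fun g => W g ^ 2) (hx2 : Summable fun g => x g ^ 2)
    (hy1 : Summable y) :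
    Summable (fun p : G × G => x p.1 * W (p.1 - p.2) * y p.2) ∧
      ∑' p : G × G, x p.1 * W (p.1 - p.2) * y p.2 ≤
        (∑' g, y g) * (√(∑' g, W g ^ 2) * √(∑' g, x g ^ 2)) := by
  have hneg : ∑' g, W (-g) ^ 2 = ∑' g, W g ^ 2 := (Equiv.neg G).tsum_eq fun g => W g ^ 2
  obtain ⟨hsum, hle⟩ := summable_and_tsum_kernel_le (W := fun g => W (-g)) (fun g => hW _) hx hy
    ((Equiv.neg G).summable_iff.2 hW2) hx2 hy1
  rw [hneg] at hle
  have hswap : ∀ p : G × G, y p.2 * W (-(p.2 - p.1)) * x p.1 = x p.1 * W (p.1 - p.2) * y p.2 :=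
    fun p => by rw [neg_sub]; ring
  refine ⟨((Equiv.prodComm G G).summable_iff.2 hsum).congr hswap, ?_⟩
  calc ∑' p : G × G, x p.1 * W (p.1 - p.2) * y p.2
      = ∑' p : G × G, y p.2 * W (-(p.2 - p.1)) * x p.1 := tsum_congr fun p => (hswap p).symm
    _ = ∑' p : G × G, y p.1 * W (-(p.1 - p.2)) * x p.2 :=
      (Equiv.prodComm G G).tsum_eq fun p => y p.1 * W (-(p.1 - p.2)) * x p.2
    _ ≤ _ := hle

end Kernel

section Fatou

variable {ι : Type*}

theorem summable_and_tsum_le_of_tendsto {g : ℕ → ι → ℝ} {h : ι → ℝ} {c : ℝ}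
    (hg : ∀ n i, 0 ≤ g n i) (hlim : ∀ i, Tendsto (fun n => g n i) atTop (nhds (h i)))
    (hbound : ∀ᶠ n in atTop, Summable (g n) ∧ ∑' i, g n i ≤ c) :
    Summable h ∧ ∑' i, h i ≤ c := by
  have hh : ∀ i, 0 ≤ h i := fun i => ge_of_tendsto' (hlim i) fun n => hg n i
  have hpartial : ∀ s : Finset ι, ∑ i ∈ s, h i ≤ c := fun s =>
    le_of_tendsto (tendsto_finsetSum s fun i _ => hlim i) (hbound.mono fun n hn =>
      (hn.1.sum_le_tsum s fun i _ => hg n i).trans hn.2)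
  have hsum := summable_of_sum_le hh hpartial
  exact ⟨hsum, hsum.tsum_le_of_sum_le hpartial⟩

/-- Completeness of weighted `ℓ²`: Fatou's lemma for sums, applied to `u n - u q` as `q → ∞`. -/
theorem summable_and_tendsto_tsum_of_cauchy {F : Type*} [SeminormedAddCommGroup F]
    {ρ : ι → ℝ} {u : ℕ → ι → F} {f : ι → F} (hu : ∀ n, Summable fun i => (ρ i * ‖u n i‖) ^ 2)
    (hlim : ∀ i, Tendsto (fun n => u n i) atTop (nhds (f i)))
    (hcauchy : Tendsto (fun pq : ℕ × ℕ => ∑' i, (ρ i * ‖u pq.1 i - u pq.2 i‖) ^ 2) atTop (nhds 0)) :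
    Summable (fun i => (ρ i * ‖f i‖) ^ 2) ∧
      Tendsto (fun n => ∑' i, (ρ i * ‖u n i - f i‖) ^ 2) atTop (nhds 0) := by
  have hclose : ∀ ε > 0, ∃ N, ∀ n ≥ N, Summable (fun i => (ρ i * ‖u n i - f i‖) ^ 2) ∧
      ∑' i, (ρ i * ‖u n i - f i‖) ^ 2 ≤ ε := by
    intro ε hε
    obtain ⟨N, hN⟩ := eventually_atTop_prod_self'.1 ((tendsto_order.1 hcauchy).2 ε hε)
    refine ⟨N, fun n hn => summable_and_tsum_le_of_tendsto
      (g := fun q i => (ρ i * ‖u n i - u q i‖) ^ 2) (fun q i => sq_nonneg _)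
      (fun i => ((tendsto_const_nhds.sub (hlim i)).norm.const_mul (ρ i)).pow 2) ?_⟩
    filter_upwards [eventually_ge_atTop N] with q hq
    exact ⟨summable_mul_sq_norm_sub (hu n) (hu q), (hN n hn q hq).le⟩
  obtain ⟨N, hN⟩ := hclose 1 one_pos
  refine ⟨by simpa using summable_mul_sq_norm_sub (hu N) (hN N le_rfl).1,
    tendsto_order.2 ⟨fun a ha => .of_forall fun n => ha.trans_le (tsum_nonneg fun i => sq_nonneg _),
      fun a ha => ?_⟩⟩
  obtain ⟨N', hN'⟩ := hclose (a / 2) (by linarith)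
  exact eventually_atTop.2 ⟨N', fun n hn => (hN' n hn).2.trans_lt (by linarith)⟩

end Fatou

section Potential

theorem norm_tsum_conv_mul_conj_le {a b c : ℤ → ℂ}
    (h : Summable fun p : ℤ × ℤ => ‖c p.1‖ * ‖a (p.1 - p.2)‖ * ‖b p.2‖) :
    ‖∑' k, conv a b k * conj (c k)‖ ≤ ∑' p : ℤ × ℤ, ‖c p.1‖ * ‖a (p.1 - p.2)‖ * ‖b p.2‖ := by
  set F : ℤ × ℤ → ℂ := fun p => a (p.1 - p.2) * b p.2 * conj (c p.1)
  have hnorm : ∀ p, ‖F p‖ = ‖c p.1‖ * ‖a (p.1 - p.2)‖ * ‖b p.2‖ := fun p => by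
    simp only [F, norm_mul, RCLike.norm_conj]; ring
  have hF : Summable F := .of_norm (h.congr fun p => (hnorm p).symm)
  have hrow : ∀ k, conv a b k * conj (c k) = ∑' j, F (k, j) := fun k => tsum_mul_right.symm
  calc ‖∑' k, conv a b k * conj (c k)‖ = ‖∑' p, F p‖ := by
        rw [hF.tsum_prod' hF.prod_factor, tsum_congr hrow]
    _ ≤ ∑' p, ‖F p‖ := norm_tsum_le_tsum_norm hF.norm
    _ = _ := tsum_congr hnorm

variable {ρ W : ℤ → ℝ} {V : ℤ → ℂ} {c : ℝ}

/-- Peetre's inequality splits `ρ (k - j)` between the two arguments; each half is Young's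
inequality. -/
theorem norm_tsum_conv_mul_conj_le_of_weight (hρ : ∀ k, 0 ≤ ρ k) (hc : 0 ≤ c)
    (hρ_sub : ∀ k j, ρ (k - j) ≤ c * (ρ k + ρ j)) (hW : ∀ k, 0 ≤ W k)
    (hW2 : Summable fun k => W k ^ 2) (hV : ∀ k, ‖V k‖ ≤ ρ k * W k) {u v : ℤ → ℂ}
    (hu1 : Summable fun k => ‖u k‖) (hv1 : Summable fun k => ‖v k‖)
    (hu2 : Summable fun k => (ρ k * ‖u k‖) ^ 2) (hv2 : Summable fun k => (ρ k * ‖v k‖) ^ 2) :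
    ‖∑' k, conv V u k * conj (v k)‖ ≤ c * √(∑' k, W k ^ 2) *
      ((∑' k, ‖v k‖) * √(∑' k, (ρ k * ‖u k‖) ^ 2) +
        (∑' k, ‖u k‖) * √(∑' k, (ρ k * ‖v k‖) ^ 2)) := by
  obtain ⟨hsum₁, hle₁⟩ := summable_and_tsum_kernel_le hW
    (fun k => mul_nonneg (hρ k) (norm_nonneg (u k))) (fun k => norm_nonneg (v k)) hW2 hu2 hv1
  obtain ⟨hsum₂, hle₂⟩ := summable_and_tsum_kernel_le' hW
    (fun k => mul_nonneg (hρ k) (norm_nonneg (v k))) (fun k => norm_nonneg (u k)) hW2 hv2 hu1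
  have hdom := (hsum₁.add hsum₂).mul_left c
  have hpt : ∀ p : ℤ × ℤ, ‖v p.1‖ * ‖V (p.1 - p.2)‖ * ‖u p.2‖ ≤
      c * (‖v p.1‖ * W (p.1 - p.2) * (ρ p.2 * ‖u p.2‖) +
        ρ p.1 * ‖v p.1‖ * W (p.1 - p.2) * ‖u p.2‖) := fun p => by
    calc ‖v p.1‖ * ‖V (p.1 - p.2)‖ * ‖u p.2‖
        ≤ ‖v p.1‖ * (c * (ρ p.1 + ρ p.2) * W (p.1 - p.2)) * ‖u p.2‖ := by
          gcongr
          exact (hV _).trans (mul_le_mul_of_nonneg_right (hρ_sub _ _) (hW _))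
      _ = _ := by ring
  have hsum := Summable.of_nonneg_of_le (fun p => by positivity) hpt hdom
  calc ‖∑' k, conv V u k * conj (v k)‖
      ≤ ∑' p : ℤ × ℤ, ‖v p.1‖ * ‖V (p.1 - p.2)‖ * ‖u p.2‖ := norm_tsum_conv_mul_conj_le hsum
    _ ≤ _ := hsum.tsum_le_tsum hpt hdom
    _ = c * (∑' p : ℤ × ℤ, ‖v p.1‖ * W (p.1 - p.2) * (ρ p.2 * ‖u p.2‖) +
          ∑' p : ℤ × ℤ, ρ p.1 * ‖v p.1‖ * W (p.1 - p.2) * ‖u p.2‖) := by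
        rw [tsum_mul_left, hsum₁.tsum_add hsum₂]
    _ ≤ _ := by
        have := mul_le_mul_of_nonneg_left (add_le_add hle₁ hle₂) hc
        linarith

/-- `V` is form-bounded with respect to the weight `ρ²` with relative bound `0`. -/
theorem exists_norm_tsum_conv_mul_conj_le (hρ : ∀ k, 0 < ρ k)
    (hρ2 : Summable fun k => (ρ k)⁻¹ ^ 2) (hc : 0 ≤ c)
    (hρ_sub : ∀ k j, ρ (k - j) ≤ c * (ρ k + ρ j)) (hW : ∀ k, 0 ≤ W k)
    (hW2 : Summable fun k => W k ^ 2) (hV : ∀ k, ‖V k‖ ≤ ρ k * W k) {ε : ℝ} (hε : 0 < ε) :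
    ∃ K ≥ 0, ∀ u : ℤ → ℂ, Summable (fun k => ‖u k‖ ^ 2) →
      Summable (fun k => (ρ k * ‖u k‖) ^ 2) →
      ‖∑' k, conv V u k * conj (u k)‖ ≤
        ε * ∑' k, (ρ k * ‖u k‖) ^ 2 + K * ∑' k, ‖u k‖ ^ 2 := by
  set D := 2 * c * √(∑' k, W k ^ 2)
  have hD : 0 ≤ D := by positivity
  obtain ⟨C, hC0, hC⟩ := exists_tsum_le_sqrt_add_sqrt hρ hρ2 (δ := ε / (2 * (D + 1)))
    (by positivity)
  refine ⟨(D * C) ^ 2 / (2 * ε), by positivity, fun u hu2 hρu2 => ?_⟩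
  obtain ⟨hu1, hL⟩ := hC (‖u ·‖) (fun k => norm_nonneg _) hu2 hρu2
  have hB := norm_tsum_conv_mul_conj_le_of_weight (fun k => (hρ k).le) hc hρ_sub hW hW2 hV
    hu1 hu1 hρu2 hρu2
  set L := ∑' k, ‖u k‖
  set a := √(∑' k, (ρ k * ‖u k‖) ^ 2)
  set b := √(∑' k, ‖u k‖ ^ 2)
  have ha : 0 ≤ a := Real.sqrt_nonneg _
  have hb : 0 ≤ b := Real.sqrt_nonneg _
  rw [← Real.sq_sqrt (tsum_nonneg fun k => sq_nonneg (ρ k * ‖u k‖)),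
    ← Real.sq_sqrt (tsum_nonneg fun k => sq_nonneg ‖u k‖)]
  have hDδ : D * (ε / (2 * (D + 1))) ≤ ε / 2 := by
    rw [mul_div_assoc', div_le_div_iff₀ (by positivity) two_pos]
    nlinarith
  have hamgm : D * C * b * a ≤ ε / 2 * a ^ 2 + (D * C) ^ 2 / (2 * ε) * b ^ 2 := by
    have hsq : ε / 2 * a ^ 2 + (D * C) ^ 2 / (2 * ε) * b ^ 2 - D * C * b * a =
        (ε * a - D * C * b) ^ 2 / (2 * ε) := by field_simp; ring
    have : 0 ≤ (ε * a - D * C * b) ^ 2 / (2 * ε) := by positivity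
    linarith
  calc ‖∑' k, conv V u k * conj (u k)‖ ≤ D * L * a := hB.trans_eq (by ring)
    _ ≤ D * (C * b + ε / (2 * (D + 1)) * a) * a := by gcongr
    _ = D * C * b * a + D * (ε / (2 * (D + 1))) * a ^ 2 := by ring
    _ ≤ ε / 2 * a ^ 2 + (D * C) ^ 2 / (2 * ε) * b ^ 2 + ε / 2 * a ^ 2 := by gcongr
    _ = _ := by ring

end Potential

section Bracket

/-- `⟨2k⟩ = 1 + |2k|`, the Sobolev weight of the Fourier coefficient `k`, i.e. of frequency `2k`. -/
def bracket (k : ℤ) : ℝ := 1 + |2 * (k : ℝ)|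

theorem one_le_bracket (k : ℤ) : 1 ≤ bracket k := le_add_of_nonneg_right (abs_nonneg (2 * (k : ℝ)))

theorem bracket_pos (k : ℤ) : 0 < bracket k := one_pos.trans_le (one_le_bracket k)

theorem abs_two_mul_le_bracket (k : ℤ) : |2 * (k : ℝ)| ≤ bracket k :=
  le_add_of_nonneg_left zero_le_one

theorem bracket_pow_sub_le (m : ℕ) (k j : ℤ) :
    bracket (k - j) ^ m ≤ 2 ^ m * (bracket k ^ m + bracket j ^ m) := by
  have hsub : bracket (k - j) ≤ bracket k + bracket j := by
    have := abs_sub (2 * (k : ℝ)) (2 * j)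
    simp only [bracket, Int.cast_sub, mul_sub]
    linarith
  calc bracket (k - j) ^ m ≤ (bracket k + bracket j) ^ m := by gcongr; exact (bracket_pos _).le
    _ ≤ 2 ^ (m - 1) * (bracket k ^ m + bracket j ^ m) :=
      add_pow_le (bracket_pos k).le (bracket_pos j).le m
    _ ≤ 2 ^ m * (bracket k ^ m + bracket j ^ m) := by
      have hk := (bracket_pos k).le
      have hj := (bracket_pos j).le
      gcongr
      exacts [one_le_two (α := ℝ), Nat.sub_le m 1]

theorem wtp_mul_sq (s : ℝ) (k : ℤ) (a : ℝ) : wtp s k * a ^ 2 = (bracket k ^ s * a) ^ 2 := by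
  have hwtp : wtp s k = bracket k ^ (2 * s) := by simp [wtp, bracket]
  rw [hwtp, mul_pow, mul_comm 2 s, Real.rpow_mul (bracket_pos k).le, Real.rpow_two]

theorem summable_inv_bracket_pow_sq {m : ℕ} (hm : 1 ≤ m) :
    Summable fun k => (bracket k ^ m)⁻¹ ^ 2 := by
  refine .of_norm_bounded_eventually (Real.summable_one_div_int_pow.2 one_lt_two) ?_
  filter_upwards [eventually_cofinite_ne 0] with k hk
  have hk : (0 : ℝ) < (k : ℝ) ^ 2 := by positivity
  have hbound : |(k : ℝ)| ≤ bracket k ^ m := by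
    calc |(k : ℝ)| ≤ bracket k := by
          have := abs_two_mul_le_bracket k
          rw [abs_mul, abs_two] at this
          linarith [abs_nonneg (k : ℝ)]
      _ ≤ bracket k ^ m := le_self_pow₀ (one_le_bracket k) (by omega)
  rw [Real.norm_eq_abs, abs_of_nonneg (by positivity), inv_pow, one_div]
  exact inv_anti₀ hk (by simpa using pow_le_pow_left₀ (abs_nonneg _) hbound 2)

theorem cplus_nonneg (m : ℕ) (k : ℤ) : 0 ≤ cplus m k := (even_two_mul m).pow_nonneg _

theorem cplus_mul_sq_le (m : ℕ) (k : ℤ) (a : ℝ) :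
    cplus m k * a ^ 2 ≤ Real.pi ^ (2 * m) * (bracket k ^ m * a) ^ 2 := by
  rw [mul_pow, ← mul_assoc]
  gcongr
  rw [cplus, show 2 * Real.pi * k = Real.pi * (2 * k) by ring, mul_pow,
    ← (even_two_mul m).pow_abs (2 * (k : ℝ)), ← pow_mul, mul_comm m 2]
  gcongr
  exact abs_two_mul_le_bracket k

theorem bracket_pow_sq_le (m : ℕ) (k : ℤ) : (bracket k ^ m) ^ 2 ≤ 4 ^ m * (1 + cplus m k) := by
  have hcplus : |2 * (k : ℝ)| ^ (2 * m) ≤ cplus m k := by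
    rw [cplus, show 2 * Real.pi * k = Real.pi * (2 * k) by ring, mul_pow,
      ← (even_two_mul m).pow_abs (2 * (k : ℝ))]
    exact le_mul_of_one_le_left (by positivity) (one_le_pow₀ (by linarith [Real.pi_gt_three]))
  calc (bracket k ^ m) ^ 2 = (1 + |2 * (k : ℝ)|) ^ (2 * m) := by rw [← pow_mul, mul_comm]; rfl
    _ ≤ 2 ^ (2 * m - 1) * (1 ^ (2 * m) + |2 * (k : ℝ)| ^ (2 * m)) :=
      add_pow_le zero_le_one (abs_nonneg _) _
    _ ≤ 4 ^ m * (1 + cplus m k) := by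
      rw [one_pow, show (4 : ℝ) ^ m = 2 ^ (2 * m) by rw [pow_mul]; norm_num]
      gcongr
      exacts [one_le_two (α := ℝ), Nat.sub_le _ _]

end Bracket

section Form

theorem summable_norm_sq (u : E) : Summable fun k => ‖u k‖ ^ 2 := by
  simpa using (lp.memℓp u).summable (by norm_num : 0 < (2 : ENNReal).toReal)

theorem norm_sq_eq_tsum (u : E) : ‖u‖ ^ 2 = ∑' k, ‖u k‖ ^ 2 := by
  simpa using lp.norm_rpow_eq_tsum (by norm_num : 0 < (2 : ENNReal).toReal) u

variable {m : ℕ}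

theorem mem_domt_iff {u : E} :
    u ∈ domt m ↔ Summable fun k => (bracket k ^ m * ‖u k‖) ^ 2 := by
  show Summable _ ↔ _
  simp only [wtp_mul_sq, Real.rpow_natCast]

theorem sub_mem_domt {u v : E} (hu : u ∈ domt m) (hv : v ∈ domt m) : u - v ∈ domt m := by
  rw [mem_domt_iff] at *
  exact summable_mul_sq_norm_sub hu hv

theorem dense_domt (m : ℕ) : Dense (domt m) := by
  classical
  refine fun f => mem_closure_of_tendsto (lp.hasSum_single ENNReal.ofNat_ne_top f)
    (.of_forall fun s => ?_)
  refine summable_of_ne_finset_zero (s := s) fun k hk => ?_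
  have hzero : (∑ i ∈ s, lp.single 2 i (f i) : E) k = 0 := by
    rw [lp.coeFn_sum, Finset.sum_apply]
    exact Finset.sum_eq_zero fun i hi => lp.single_apply_ne _ _ _ (ne_of_mem_of_not_mem hi hk).symm
  rw [hzero, norm_zero, zero_pow two_ne_zero, mul_zero]

theorem norm_sq_le_tsum_bracket {u : E} (hu : u ∈ domt m) :
    ‖u‖ ^ 2 ≤ ∑' k, (bracket k ^ m * ‖u k‖) ^ 2 := by
  rw [norm_sq_eq_tsum]
  refine (summable_norm_sq u).tsum_le_tsum (fun k => ?_) (mem_domt_iff.1 hu)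
  rw [mul_pow]
  exact le_mul_of_one_le_left (sq_nonneg _) (one_le_pow₀ (one_le_pow₀ (one_le_bracket k)))

theorem summable_cplus_mul {u : E} (hu : u ∈ domt m) :
    Summable fun k => cplus m k * ‖u k‖ ^ 2 := by
  exact .of_nonneg_of_le (fun k => mul_nonneg (cplus_nonneg m k) (sq_nonneg _))
    (fun k => cplus_mul_sq_le m k _) ((mem_domt_iff.1 hu).mul_left _)

theorem tsum_cplus_le {u : E} (hu : u ∈ domt m) :
    ∑' k, cplus m k * ‖u k‖ ^ 2 ≤ Real.pi ^ (2 * m) * ∑' k, (bracket k ^ m * ‖u k‖) ^ 2 := by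
  rw [← tsum_mul_left]
  exact (summable_cplus_mul hu).tsum_le_tsum (fun k => cplus_mul_sq_le m k _)
    ((mem_domt_iff.1 hu).mul_left _)

theorem tsum_bracket_le {u : E} (hu : u ∈ domt m) :
    ∑' k, (bracket k ^ m * ‖u k‖) ^ 2 ≤ 4 ^ m * (‖u‖ ^ 2 + ∑' k, cplus m k * ‖u k‖ ^ 2) := by
  have hsum := (summable_norm_sq u).add (summable_cplus_mul hu)
  rw [norm_sq_eq_tsum, ← (summable_norm_sq u).tsum_add (summable_cplus_mul hu), ← tsum_mul_left]
  refine (mem_domt_iff.1 hu).tsum_le_tsum (fun k => ?_) (hsum.mul_left _)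
  calc (bracket k ^ m * ‖u k‖) ^ 2 = (bracket k ^ m) ^ 2 * ‖u k‖ ^ 2 := mul_pow _ _ _
    _ ≤ 4 ^ m * (1 + cplus m k) * ‖u k‖ ^ 2 := by gcongr; exact bracket_pow_sq_le m k
    _ = 4 ^ m * (‖u k‖ ^ 2 + cplus m k * ‖u k‖ ^ 2) := by ring

theorem tform_self (V : ℤ → ℂ) (u : E) :
    tform m V u u = ((∑' k, cplus m k * ‖u k‖ ^ 2 : ℝ) : ℂ) + ∑' k, conv V u k * conj (u k) := by
  rw [tform, Complex.ofReal_tsum]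
  congr 1
  refine tsum_congr fun k => ?_
  rw [mul_assoc, Complex.mul_conj, Complex.normSq_eq_norm_sq]
  push_cast
  ring

end Form

section Estimates

variable {m : ℕ} {V : ℤ → ℂ}

theorem exists_norm_tform_sub_le (hm : 1 ≤ m)
    (hV : Summable fun k : ℤ => wtp (-(m : ℝ)) k * ‖V k‖ ^ 2) :
    ∃ K ≥ 0, ∀ u ∈ domt m, ‖tform m V u u - ((∑' k, cplus m k * ‖u k‖ ^ 2 : ℝ) : ℂ)‖ ≤
      (∑' k, cplus m k * ‖u k‖ ^ 2) / 2 + K * ‖u‖ ^ 2 := by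
  set W : ℤ → ℝ := fun k => (bracket k ^ m)⁻¹ * ‖V k‖
  have hW2 : Summable fun k => W k ^ 2 := by
    refine hV.congr fun k => ?_
    rw [wtp_mul_sq, Real.rpow_neg (bracket_pos k).le, Real.rpow_natCast]
  have hVW : ∀ k, ‖V k‖ ≤ bracket k ^ m * W k := fun k =>
    (mul_inv_cancel_left₀ (pow_pos (bracket_pos k) m).ne' _).ge
  obtain ⟨K, hK, hB⟩ := exists_norm_tsum_conv_mul_conj_le (ρ := fun k => bracket k ^ m)
    (fun k => pow_pos (bracket_pos k) m) (summable_inv_bracket_pow_sq hm)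
    (by positivity : (0 : ℝ) ≤ 2 ^ m) (bracket_pow_sub_le m)
    (fun k => mul_nonneg (inv_nonneg.2 (pow_pos (bracket_pos k) m).le) (norm_nonneg _)) hW2 hVW
    (ε := 1 / (2 * 4 ^ m)) (by positivity)
  refine ⟨K + 1 / 2, by positivity, fun u hu => ?_⟩
  rw [tform_self, add_sub_cancel_left]
  calc _ ≤ 1 / (2 * 4 ^ m) * ∑' k, (bracket k ^ m * ‖u k‖) ^ 2 + K * ‖u‖ ^ 2 := by
        rw [norm_sq_eq_tsum]
        exact hB u (summable_norm_sq u) (mem_domt_iff.1 hu)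
    _ ≤ 1 / (2 * 4 ^ m) * (4 ^ m * (‖u‖ ^ 2 + ∑' k, cplus m k * ‖u k‖ ^ 2)) + K * ‖u‖ ^ 2 := by
        gcongr
        exact tsum_bracket_le hu
    _ = _ := by field_simp; ring

theorem sector_of_norm_sub_le {z : ℂ} {a n K : ℝ} (ha : 0 ≤ a) (hn : 0 ≤ n) (hK : 0 ≤ K)
    (h : ‖z - a‖ ≤ a / 2 + K * n) :
    -(K + 1) * n ≤ z.re ∧ |z.im| ≤ (K + 1) * (z.re - -(K + 1) * n) := by
  have hre : a / 2 - K * n ≤ z.re := by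
    have h1 := Complex.abs_re_le_norm (z - a)
    have h2 := neg_abs_le (z - a).re
    rw [Complex.sub_re, Complex.ofReal_re] at h1 h2
    linarith
  have him : |z.im| ≤ a / 2 + K * n := by
    have := Complex.abs_im_le_norm (z - a)
    rw [Complex.sub_im, Complex.ofReal_im, sub_zero] at this
    linarith
  refine ⟨by nlinarith, ?_⟩
  nlinarith [mul_le_mul_of_nonneg_left hre (by positivity : 0 ≤ K + 1)]

variable {K : ℝ} (hK : ∀ u ∈ domt m, ‖tform m V u u - ((∑' k, cplus m k * ‖u k‖ ^ 2 : ℝ) : ℂ)‖ ≤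
  (∑' k, cplus m k * ‖u k‖ ^ 2) / 2 + K * ‖u‖ ^ 2)
include hK

theorem tsum_bracket_le_norm_tform {u : E} (hu : u ∈ domt m) :
    ∑' k, (bracket k ^ m * ‖u k‖) ^ 2 ≤ 4 ^ m * ((2 * K + 1) * ‖u‖ ^ 2 + 2 * ‖tform m V u u‖) := by
  refine (tsum_bracket_le hu).trans (mul_le_mul_of_nonneg_left ?_ (by positivity))
  set A := ∑' k, cplus m k * ‖u k‖ ^ 2
  have h1 := Complex.abs_re_le_norm (tform m V u u - A)
  have h2 := neg_abs_le (tform m V u u - A).re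
  have h3 := Complex.re_le_norm (tform m V u u)
  rw [Complex.sub_re, Complex.ofReal_re] at h1 h2
  linarith [hK u hu]

theorem norm_tform_le_tsum_bracket (hK0 : 0 ≤ K) {u : E} (hu : u ∈ domt m) :
    ‖tform m V u u‖ ≤ (3 / 2 * Real.pi ^ (2 * m) + K) * ∑' k, (bracket k ^ m * ‖u k‖) ^ 2 := by
  have htri := norm_le_norm_sub_add (tform m V u u) ((∑' k, cplus m k * ‖u k‖ ^ 2 : ℝ) : ℂ)
  rw [Complex.norm_real, Real.norm_of_nonneg (tsum_nonneg fun k => ?_)] at htri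
  · nlinarith [hK u hu, tsum_cplus_le hu, norm_sq_le_tsum_bracket hu]
  · exact mul_nonneg (cplus_nonneg m k) (sq_nonneg _)

theorem tform_closed (hK0 : 0 ≤ K) (u : ℕ → E) (hu : ∀ n, u n ∈ domt m) (f : E)
    (hf : Tendsto u atTop (nhds f))
    (hcauchy : ∀ ε > (0 : ℝ), ∃ N, ∀ p ≥ N, ∀ q ≥ N,
      ‖tform m V (u p - u q) (u p - u q)‖ < ε) :
    f ∈ domt m ∧ Tendsto (fun n => tform m V (u n - f) (u n - f)) atTop (nhds 0) := by
  have hform : Tendsto (fun pq : ℕ × ℕ => ‖tform m V (u pq.1 - u pq.2) (u pq.1 - u pq.2)‖)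
      atTop (nhds 0) :=
    Metric.tendsto_nhds.2 fun ε hε => eventually_atTop_prod_self'.2 (by simpa using hcauchy ε hε)
  have hl2 : Tendsto (fun pq : ℕ × ℕ => ‖u pq.1 - u pq.2‖) atTop (nhds 0) := by
    simpa [dist_eq_norm] using cauchySeq_iff_tendsto_dist_atTop_0.1 hf.cauchySeq
  have hweighted : Tendsto (fun pq : ℕ × ℕ => ∑' k, (bracket k ^ m * ‖u pq.1 k - u pq.2 k‖) ^ 2)
      atTop (nhds 0) := by
    refine squeeze_zero (fun _ => tsum_nonneg fun _ => sq_nonneg _)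
      (fun pq => tsum_bracket_le_norm_tform hK (sub_mem_domt (hu pq.1) (hu pq.2))) ?_
    simpa using (((hl2.pow 2).const_mul (2 * K + 1)).add (hform.const_mul 2)).const_mul (4 ^ m)
  have hlim : ∀ k, Tendsto (fun n => u n k) atTop (nhds (f k)) := fun k =>
    tendsto_pi_nhds.1 ((lp.uniformContinuous_coe.continuous.tendsto f).comp hf) k
  obtain ⟨hf2, hconv⟩ := summable_and_tendsto_tsum_of_cauchy
    (fun n => mem_domt_iff.1 (hu n)) hlim hweighted
  have hfmem : f ∈ domt m := mem_domt_iff.2 hf2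
  refine ⟨hfmem, squeeze_zero_norm
    (fun n => norm_tform_le_tsum_bracket hK hK0 (sub_mem_domt (hu n) hfmem)) ?_⟩
  simpa using hconv.const_mul (3 / 2 * Real.pi ^ (2 * m) + K)

end Estimates

theorem form_densely_defined_closed_sectorial (m : ℕ) (hm : 1 ≤ m) (V : ℤ → ℂ)
    (hV : Summable fun k : ℤ => wtp (-(m : ℝ)) k * ‖V k‖ ^ 2) :
    -- densely defined
    Dense (domt m) ∧
    -- sectorial: the numerical range lies in a sector with vertex γ and
    -- half-angle θ < π/2 (M = tan θ)
    (∃ γ : ℝ, ∃ M ≥ (0 : ℝ), ∀ u ∈ domt m,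
      γ * ‖u‖ ^ 2 ≤ (tform m V u u).re ∧
      |(tform m V u u).im| ≤ M * ((tform m V u u).re - γ * ‖u‖ ^ 2)) ∧
    -- closed: if uₙ ∈ dom t, uₙ → f in L² and t[uₙ−u_q] → 0, then f ∈ dom t
    -- and t[uₙ−f] → 0
    (∀ u : ℕ → E, (∀ n, u n ∈ domt m) → ∀ f : E,
      Tendsto u atTop (nhds f) →
      (∀ ε > (0 : ℝ), ∃ N, ∀ p ≥ N, ∀ q ≥ N,
        ‖tform m V (u p - u q) (u p - u q)‖ < ε) →
      f ∈ domt m ∧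
        Tendsto (fun n => tform m V (u n - f) (u n - f)) atTop (nhds 0)) := by
  obtain ⟨K, hK0, hK⟩ := exists_norm_tform_sub_le hm hV
  refine ⟨dense_domt m, ⟨-(K + 1), K + 1, by positivity, fun u hu => ?_⟩, tform_closed hK hK0⟩
  exact sector_of_norm_sub_le (tsum_nonneg fun k => mul_nonneg (cplus_nonneg m k) (sq_nonneg _))
    (sq_nonneg _) hK0 (hK u hu)
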